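/- Assume condition (★) holds for every x ∈ V∪∂V. Then for every increasing function f : {0,1}^{E∪∂E} → ℝ, φ^w_{G;β,q,ĥ}(f) ≤ ℙ(f), where ℙ is the product probability measure on {0,1}^{E∪∂E} under which each edge e ∈ E is independently open with probability p_e = 1 − exp(−qβJ_e) and each edge e ∈ ∂E is open with probability 1. -/

import Mathlib

open Classical Finset

noncomputable section

/-- Two vertices are joined by an open edge of the configuration `ω`. -/
def OpenAdj {V E : Type*} (ends : E → V × V) (ω : E → Bool) (x y : V) : Prop :=
  ∃ e, ω e = true ∧ (ends e = (x, y) ∨ ends e = (y, x))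

/-- `x` and `y` lie in the same open cluster of the configuration `ω`. -/
def ConnIn {V E : Type*} (ends : E → V × V) (ω : E → Bool) (x y : V) : Prop :=
  Relation.ReflTransGen (OpenAdj ends ω) x y

/-- The open cluster of the vertex `x` in the configuration `ω`. -/
def cluster {V E : Type*} [Fintype V] (ends : E → V × V) (ω : E → Bool) (x : V) : Finset V :=
  Finset.univ.filter fun y => ConnIn ends ω x y

/-- The collection of all open clusters of the configuration `ω`
(the vertex sets of the connected components of the open subgraph). -/
def clusters {V E : Type*} [Fintype V] (ends : E → V × V) (ω : E → Bool) :
    Finset (Finset V) :=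
  Finset.univ.image fun x => cluster ends ω x

/-- The free cluster weight `Θ^f[C] = Σ_{m=1}^q exp(β Σ_{x∈C} h_{x,m})`. -/
def thetaF {V : Type*} (q : ℕ) (β : ℝ) (h : V → Fin q → ℝ) (C : Finset V) : ℝ :=
  ∑ m : Fin q, Real.exp (β * ∑ x ∈ C, h x m)

/-- The max-wired cluster weight: `Θ^f[C]` for clusters not touching the boundary `Vb`,
and `exp(β Σ_{x∈C} hmax x)` for clusters touching the boundary. -/
def thetaW {V : Type*} (q : ℕ) (β : ℝ) (h : V → Fin q → ℝ) (hmax : V → ℝ)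
    (Vb : Finset V) (C : Finset V) : ℝ :=
  if C ∩ Vb = ∅ then thetaF q β h C else Real.exp (β * ∑ x ∈ C, hmax x)

/-- The function `g^f(ω) = Π_C Θ^f[C]`, the product over the open clusters of `ω`. -/
def gFree {V E : Type*} [Fintype V] (ends : E → V × V) (q : ℕ) (β : ℝ)
    (h : V → Fin q → ℝ) (ω : E → Bool) : ℝ :=
  ∏ C ∈ clusters ends ω, thetaF q β h C

/-- The function `g^w(ω) = Π_C Θ^w[C]`, the product over the open clusters of `ω`. -/
def gWired {V E : Type*} [Fintype V] (ends : E → V × V) (q : ℕ) (β : ℝ)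
    (h : V → Fin q → ℝ) (hmax : V → ℝ) (Vb : Finset V) (ω : E → Bool) : ℝ :=
  ∏ C ∈ clusters ends ω, thetaW q β h hmax Vb C

/-- The edge factor `Π_e (exp(qβJ_e) − 1)^{ω_e}`. -/
def edgeFactor {E : Type*} [Fintype E] (q : ℕ) (β : ℝ) (J : E → ℝ) (ω : E → Bool) : ℝ :=
  ∏ e : E, if ω e then Real.exp ((q : ℝ) * β * J e) - 1 else 1

/-- The unnormalised weight of the free random-cluster measure. -/
def freeWeight {V E : Type*} [Fintype V] [Fintype E] (ends : E → V × V) (q : ℕ) (β : ℝ)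
    (J : E → ℝ) (h : V → Fin q → ℝ) (ω : E → Bool) : ℝ :=
  edgeFactor q β J ω * gFree ends q β h ω

/-- The expectation `φ^f_{G;β,q,ĥ}(f)` under the free random-cluster measure. -/
def freeExp {V E : Type*} [Fintype V] [Fintype E] (ends : E → V × V) (q : ℕ) (β : ℝ)
    (J : E → ℝ) (h : V → Fin q → ℝ) (f : (E → Bool) → ℝ) : ℝ :=
  (∑ ω : E → Bool, f ω * freeWeight ends q β J h ω) /
    ∑ ω : E → Bool, freeWeight ends q β J h ω

/-- The unnormalised weight of the max-wired random-cluster measure: supported on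
configurations opening all boundary edges `Eb`, with edge factor over interior edges
and cluster weights `Θ^w`. -/
def wiredWeight {V E : Type*} [Fintype V] [Fintype E] (ends : E → V × V) (q : ℕ) (β : ℝ)
    (J : E → ℝ) (h : V → Fin q → ℝ) (hmax : V → ℝ) (Vb : Finset V) (Eb : Finset E)
    (ω : E → Bool) : ℝ :=
  (if ∀ e ∈ Eb, ω e = true then (1 : ℝ) else 0) *
    (∏ e ∈ Ebᶜ, if ω e then Real.exp ((q : ℝ) * β * J e) - 1 else 1) *
    gWired ends q β h hmax Vb ω

/-- The expectation `φ^w_{G;β,q,ĥ}(f)` under the max-wired random-cluster measure. -/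
def wiredExp {V E : Type*} [Fintype V] [Fintype E] (ends : E → V × V) (q : ℕ) (β : ℝ)
    (J : E → ℝ) (h : V → Fin q → ℝ) (hmax : V → ℝ) (Vb : Finset V) (Eb : Finset E)
    (f : (E → Bool) → ℝ) : ℝ :=
  (∑ ω : E → Bool, f ω * wiredWeight ends q β J h hmax Vb Eb ω) /
    ∑ ω : E → Bool, wiredWeight ends q β J h hmax Vb Eb ω

/-- The expectation under the Bernoulli product measure in which each edge `e` is
independently open with probability `p_e = 1 − exp(−qβJ_e)`. -/
def bernExp {E : Type*} [Fintype E] (q : ℕ) (β : ℝ) (J : E → ℝ)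
    (f : (E → Bool) → ℝ) : ℝ :=
  ∑ ω : E → Bool, f ω *
    ∏ e : E, if ω e then 1 - Real.exp (-((q : ℝ) * β * J e))
      else Real.exp (-((q : ℝ) * β * J e))

/-- A function of configurations is increasing for the coordinatewise order. -/
def IncreasingFn {E : Type*} (f : (E → Bool) → ℝ) : Prop :=
  ∀ ⦃ω ω' : E → Bool⦄, (∀ e, ω e ≤ ω' e) → f ω ≤ f ω'

/-- Condition (★): there is a common colour `m*` attaining the maximal field
value `h_{x,max}` at every vertex `x`. -/
def StarCond {V : Type*} (q : ℕ) (h : V → Fin q → ℝ) : Prop :=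
  ∃ m : Fin q, ∀ x k, h x k ≤ h x m

/-- Compatibility of the boundary data: every boundary edge joins an interior vertex to a
boundary vertex, and every interior edge joins two interior vertices (this is the structure
of `E ∪ ∂E` for a finite subgraph `G = (V,E)` of the hypercubic lattice, with `Vb = ∂V`
and `Eb = ∂E`). -/
def BdryCompatible {V E : Type*} (ends : E → V × V) (Vb : Finset V) (Eb : Finset E) : Prop :=
  (∀ e ∈ Eb, ((ends e).1 ∈ Vb ∧ (ends e).2 ∉ Vb) ∨ ((ends e).1 ∉ Vb ∧ (ends e).2 ∈ Vb)) ∧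
    ∀ e ∉ Eb, (ends e).1 ∉ Vb ∧ (ends e).2 ∉ Vb

/-- Indicator of the event `{x ↔ y}`. -/
def connInd {V E : Type*} (ends : E → V × V) (x y : V) (ω : E → Bool) : ℝ :=
  if ConnIn ends ω x y then 1 else 0

/-- Indicator of the event `{x ↔ S}` that some vertex of `S` lies in the open cluster
of `x`. -/
def connToSetInd {V E : Type*} (ends : E → V × V) (x : V) (S : Finset V)
    (ω : E → Bool) : ℝ :=
  if ∃ y ∈ S, ConnIn ends ω x y then 1 else 0


/-!
Under (★) a single colour `m*` realises the maximal field everywhere, so merging two disjoint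
clusters never increases the product of max-wired cluster weights: the weight `g^w` of a
configuration is decreasing. After cancelling the constant `∏_e exp(qβJ_e)`, the max-wired measure
is the Bernoulli product measure `ℙ` tilted by the density `g^w / ℙ(g^w)`, and the Harris–FKG
inequality for the increasing `f` and the decreasing `g^w` gives `ℙ(f g^w) ≤ ℙ(f) ℙ(g^w)`.
-/

section Connectivity

variable {V E : Type*} {ends : E → V × V} {ω ω' : E → Bool}

instance : Std.Symm (OpenAdj ends ω) := ⟨fun _ _ ⟨e, he, h⟩ => ⟨e, he, h.symm⟩⟩

lemma ConnIn.refl (x : V) : ConnIn ends ω x x := Relation.ReflTransGen.refl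

lemma ConnIn.symm {x y : V} (h : ConnIn ends ω x y) : ConnIn ends ω y x :=
  Std.Symm.symm (r := Relation.ReflTransGen (OpenAdj ends ω)) _ _ h

lemma ConnIn.trans {x y z : V} (h : ConnIn ends ω x y) (h' : ConnIn ends ω y z) :
    ConnIn ends ω x z :=
  Relation.ReflTransGen.trans h h'

lemma ConnIn.mono (hω : ω ≤ ω') {x y : V} (h : ConnIn ends ω x y) : ConnIn ends ω' x y :=
  Relation.ReflTransGen.mono
    (fun _ _ ⟨e, he, hend⟩ => ⟨e, Bool.eq_true_of_true_le (by simpa only [he] using hω e), hend⟩)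
    x y h

lemma le_update_true (ω : E → Bool) (e : E) : ω ≤ Function.update ω e true :=
  le_update_iff.2 ⟨le_top, fun _ _ => le_rfl⟩

lemma OpenAdj.of_update {e : E} {u v : V} (h : OpenAdj ends (Function.update ω e true) u v) :
    OpenAdj ends ω u v ∨ ends e = (u, v) ∨ ends e = (v, u) := by
  obtain ⟨e', he', hend⟩ := h
  by_cases he : e' = e
  · subst he; exact Or.inr hend
  · exact Or.inl ⟨e', by rwa [Function.update_of_ne he] at he', hend⟩

lemma connIn_update_iff {e : E} {a b : V} :
    ConnIn ends (Function.update ω e true) a b ↔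
      ConnIn ends ω a b ∨
        (ConnIn ends ω a (ends e).1 ∧ ConnIn ends ω (ends e).2 b) ∨
        (ConnIn ends ω a (ends e).2 ∧ ConnIn ends ω (ends e).1 b) := by
  constructor
  · intro h
    induction h with
    | refl => exact Or.inl (ConnIn.refl a)
    | @tail c b _ hstep ih =>
      rcases hstep.of_update with hadj | hend | hend
      · rcases ih with h | ⟨h₁, h₂⟩ | ⟨h₁, h₂⟩
        exacts [Or.inl (h.tail hadj), Or.inr (Or.inl ⟨h₁, h₂.tail hadj⟩),
          Or.inr (Or.inr ⟨h₁, h₂.tail hadj⟩)]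
      · simp only [hend] at ih ⊢
        rcases ih with h | ⟨h, -⟩ | ⟨h, -⟩
        exacts [Or.inr (Or.inl ⟨h, .refl b⟩), Or.inr (Or.inl ⟨h, .refl b⟩), Or.inl h]
      · simp only [hend] at ih ⊢
        rcases ih with h | ⟨h, -⟩ | ⟨h, -⟩
        exacts [Or.inr (Or.inr ⟨h, .refl b⟩), Or.inl h, Or.inr (Or.inr ⟨h, .refl b⟩)]
  · have hle := le_update_true ω e
    have hxy : ConnIn ends (Function.update ω e true) (ends e).1 (ends e).2 :=
      Relation.ReflTransGen.single ⟨e, Function.update_self _ _ _, Or.inl rfl⟩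
    rintro (h | ⟨h₁, h₂⟩ | ⟨h₁, h₂⟩)
    · exact h.mono hle
    · exact ((h₁.mono hle).trans hxy).trans (h₂.mono hle)
    · exact ((h₁.mono hle).trans hxy.symm).trans (h₂.mono hle)

end Connectivity

section Clusters

variable {V E : Type*} [Fintype V] {ends : E → V × V} {ω : E → Bool}

lemma mem_cluster {x y : V} : y ∈ cluster ends ω x ↔ ConnIn ends ω x y := by
  simp [cluster]

lemma self_mem_cluster (x : V) : x ∈ cluster ends ω x := mem_cluster.2 (ConnIn.refl x)

lemma cluster_eq_of_connIn {x y : V} (h : ConnIn ends ω x y) :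
    cluster ends ω x = cluster ends ω y := by
  ext z
  simp only [mem_cluster]
  exact ⟨h.symm.trans, h.trans⟩

lemma cluster_mem_clusters (x : V) : cluster ends ω x ∈ clusters ends ω :=
  mem_image_of_mem _ (mem_univ x)

lemma connIn_of_mem_clusters {C : Finset V} (hC : C ∈ clusters ends ω) {x y : V} (hx : x ∈ C)
    (hy : y ∈ C) : ConnIn ends ω x y := by
  obtain ⟨z, -, rfl⟩ := mem_image.1 hC
  exact (mem_cluster.1 hx).symm.trans (mem_cluster.1 hy)

lemma disjoint_cluster {x y : V} (hxy : ¬ ConnIn ends ω x y) :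
    Disjoint (cluster ends ω x) (cluster ends ω y) :=
  disjoint_left.2 fun _ hzx hzy => hxy ((mem_cluster.1 hzx).trans (mem_cluster.1 hzy).symm)

lemma cluster_update_of_connIn_ends {e : E} {z : V}
    (hz : ConnIn ends ω z (ends e).1 ∨ ConnIn ends ω z (ends e).2) :
    cluster ends (Function.update ω e true) z =
      cluster ends ω (ends e).1 ∪ cluster ends ω (ends e).2 := by
  ext w
  simp only [mem_cluster, mem_union, connIn_update_iff]
  constructor
  · rintro (h | ⟨-, h⟩ | ⟨-, h⟩)
    · exact hz.imp (fun hz => hz.symm.trans h) (fun hz => hz.symm.trans h)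
    · exact Or.inr h
    · exact Or.inl h
  · rintro (h | h) <;> rcases hz with hz | hz
    exacts [Or.inl (hz.trans h), Or.inr (Or.inr ⟨hz, h⟩), Or.inr (Or.inl ⟨hz, h⟩),
      Or.inl (hz.trans h)]

lemma cluster_update_of_not_connIn_ends {e : E} {z : V} (hzx : ¬ ConnIn ends ω z (ends e).1)
    (hzy : ¬ ConnIn ends ω z (ends e).2) :
    cluster ends (Function.update ω e true) z = cluster ends ω z := by
  ext w
  simp only [mem_cluster, connIn_update_iff]
  refine ⟨?_, Or.inl⟩
  rintro (h | ⟨h, -⟩ | ⟨h, -⟩)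
  exacts [h, absurd h hzx, absurd h hzy]

lemma clusters_update (e : E) :
    clusters ends (Function.update ω e true) =
      insert (cluster ends ω (ends e).1 ∪ cluster ends ω (ends e).2)
        (clusters ends ω \ {cluster ends ω (ends e).1, cluster ends ω (ends e).2}) := by
  ext C
  simp only [clusters, mem_insert, mem_sdiff, mem_image, mem_univ, true_and]
  constructor
  · rintro ⟨z, rfl⟩
    by_cases hz : ConnIn ends ω z (ends e).1 ∨ ConnIn ends ω z (ends e).2
    · exact Or.inl (cluster_update_of_connIn_ends hz)
    · push Not at hz
      rw [cluster_update_of_not_connIn_ends hz.1 hz.2]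
      refine Or.inr ⟨⟨z, rfl⟩, ?_⟩
      simp only [mem_singleton, not_or]
      exact ⟨fun h => hz.1 (mem_cluster.1 (by rw [h]; exact self_mem_cluster _)),
        fun h => hz.2 (mem_cluster.1 (by rw [h]; exact self_mem_cluster _))⟩
  · rintro (rfl | ⟨⟨z, rfl⟩, hz⟩)
    · exact ⟨_, cluster_update_of_connIn_ends (Or.inl (ConnIn.refl _))⟩
    · simp only [mem_singleton, not_or] at hz
      exact ⟨z, cluster_update_of_not_connIn_ends
        (fun h => hz.1 (cluster_eq_of_connIn h)) (fun h => hz.2 (cluster_eq_of_connIn h))⟩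

lemma clusters_update_of_connIn {e : E} (hxy : ConnIn ends ω (ends e).1 (ends e).2) :
    clusters ends (Function.update ω e true) = clusters ends ω := by
  rw [clusters_update, cluster_eq_of_connIn hxy, union_self, pair_eq_singleton,
    sdiff_singleton_eq_erase, insert_erase (cluster_mem_clusters _)]

end Clusters

section ClusterWeights

variable {V : Type*} {q : ℕ} {h : V → Fin q → ℝ} {hmax : V → ℝ}

lemma thetaF_pos (hq : 0 < q) (β : ℝ) (h : V → Fin q → ℝ) (C : Finset V) :
    0 < thetaF q β h C :=
  haveI : Nonempty (Fin q) := ⟨⟨0, hq⟩⟩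
  sum_pos (fun _ _ => Real.exp_pos _) univ_nonempty

lemma thetaW_pos (hq : 0 < q) (β : ℝ) (h : V → Fin q → ℝ) (hmax : V → ℝ) (Vb C : Finset V) :
    0 < thetaW q β h hmax Vb C := by
  unfold thetaW
  split
  exacts [thetaF_pos hq β h C, Real.exp_pos _]

lemma exp_sum_le_thetaF (β : ℝ) (hstar : ∃ m : Fin q, ∀ x, h x m = hmax x) (C : Finset V) :
    Real.exp (β * ∑ x ∈ C, hmax x) ≤ thetaF q β h C := by
  obtain ⟨m, hm⟩ := hstar
  simp only [← hm]
  exact single_le_sum (f := fun k => Real.exp (β * ∑ x ∈ C, h x k))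
    (fun _ _ => (Real.exp_pos _).le) (mem_univ m)

lemma thetaF_union_le (β : ℝ) (h : V → Fin q → ℝ) {A B : Finset V} (hAB : Disjoint A B) :
    thetaF q β h (A ∪ B) ≤ thetaF q β h A * thetaF q β h B := by
  rw [thetaF, thetaF, sum_mul]
  refine sum_le_sum fun m _ => ?_
  rw [sum_union hAB, mul_add, Real.exp_add]
  exact mul_le_mul_of_nonneg_left
    (single_le_sum (f := fun k => Real.exp (β * ∑ x ∈ B, h x k))
      (fun _ _ => (Real.exp_pos _).le) (mem_univ m)) (Real.exp_pos _).le

lemma thetaW_union_le (β : ℝ) (hstar : ∃ m : Fin q, ∀ x, h x m = hmax x) (Vb : Finset V)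
    {A B : Finset V} (hAB : Disjoint A B) :
    thetaW q β h hmax Vb (A ∪ B) ≤ thetaW q β h hmax Vb A * thetaW q β h hmax Vb B := by
  have hexp : Real.exp (β * ∑ x ∈ A ∪ B, hmax x) =
      Real.exp (β * ∑ x ∈ A, hmax x) * Real.exp (β * ∑ x ∈ B, hmax x) := by
    rw [sum_union hAB, mul_add, Real.exp_add]
  simp only [thetaW, union_inter_distrib_right, union_eq_empty]
  by_cases hA : A ∩ Vb = ∅ <;> by_cases hB : B ∩ Vb = ∅ <;> simp only [hA, hB, and_true,
    and_false, if_true, if_false, hexp]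
  · exact thetaF_union_le β h hAB
  · exact mul_le_mul_of_nonneg_right (exp_sum_le_thetaF β hstar A) (Real.exp_pos _).le
  · exact mul_le_mul_of_nonneg_left (exp_sum_le_thetaF β hstar B) (Real.exp_pos _).le
  · exact le_rfl

end ClusterWeights

lemma antitone_of_update_true_le {E β : Type*} [Fintype E] [Preorder β] {φ : (E → Bool) → β}
    (h : ∀ ω e, φ (Function.update ω e true) ≤ φ ω) : Antitone φ := by
  intro ω ω' hle
  have hopen : ∀ S : Finset E, φ (fun e => ω e || decide (e ∈ S)) ≤ φ ω := by
    intro S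
    induction S using Finset.induction_on with
    | empty => simp
    | insert a S _ ih =>
      have hS : (fun e => ω e || decide (e ∈ insert a S)) =
          Function.update (fun e => ω e || decide (e ∈ S)) a true := by
        funext e
        by_cases he : e = a <;> simp [he]
      exact hS ▸ (h _ a).trans ih
  have hω' : (fun e => ω e || decide (e ∈ univ.filter fun e => ω' e)) = ω' := by
    funext e
    have := hle e
    cases hωe : ω e <;> cases hω'e : ω' e <;> simp_all [Bool.le_iff_imp]
  exact hω' ▸ hopen _

section WiredClusterWeight

variable {V E : Type*} [Fintype V] {ends : E → V × V} {q : ℕ} {β : ℝ}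
  {h : V → Fin q → ℝ} {hmax : V → ℝ} {Vb : Finset V}

lemma gWired_pos (hq : 0 < q) (ω : E → Bool) : 0 < gWired ends q β h hmax Vb ω :=
  prod_pos fun C _ => thetaW_pos hq β h hmax Vb C

lemma gWired_update_le (hstar : ∃ m : Fin q, ∀ x, h x m = hmax x) (ω : E → Bool) (e : E) :
    gWired ends q β h hmax Vb (Function.update ω e true) ≤ gWired ends q β h hmax Vb ω := by
  have hq : 0 < q := hstar.elim fun m _ => m.pos
  by_cases hxy : ConnIn ends ω (ends e).1 (ends e).2
  · rw [gWired, gWired, clusters_update_of_connIn hxy]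
  set Θ := thetaW q β h hmax Vb
  set Cx := cluster ends ω (ends e).1
  set Cy := cluster ends ω (ends e).2
  have hne : Cx ≠ Cy := fun hC => hxy (mem_cluster.1 (hC ▸ self_mem_cluster _ : (ends e).2 ∈ Cx))
  have hsub : {Cx, Cy} ⊆ clusters ends ω :=
    insert_subset (cluster_mem_clusters _) (singleton_subset_iff.2 (cluster_mem_clusters _))
  have hmerged : Cx ∪ Cy ∉ clusters ends ω \ {Cx, Cy} := fun hC => hxy <|
    connIn_of_mem_clusters (mem_sdiff.1 hC).1 (mem_union_left _ (self_mem_cluster _))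
      (mem_union_right _ (self_mem_cluster _))
  calc gWired ends q β h hmax Vb (Function.update ω e true)
      = Θ (Cx ∪ Cy) * ∏ C ∈ clusters ends ω \ {Cx, Cy}, Θ C := by
        rw [gWired, clusters_update, prod_insert hmerged]
    _ ≤ Θ Cx * Θ Cy * ∏ C ∈ clusters ends ω \ {Cx, Cy}, Θ C :=
        mul_le_mul_of_nonneg_right (thetaW_union_le β hstar Vb (disjoint_cluster hxy))
          (prod_nonneg fun C _ => (thetaW_pos hq β h hmax Vb C).le)
    _ = gWired ends q β h hmax Vb ω := by
        rw [gWired, ← prod_sdiff hsub, prod_pair hne, mul_comm]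

lemma gWired_antitone [Fintype E] (hstar : ∃ m : Fin q, ∀ x, h x m = hmax x) :
    Antitone (gWired ends q β h hmax Vb) :=
  antitone_of_update_true_le (gWired_update_le hstar)

end WiredClusterWeight

section Bernoulli

variable {E : Type*} [Fintype E] {p : E → ℝ}

def bernoulliWeight (p : E → ℝ) (ω : E → Bool) : ℝ :=
  ∏ e, if ω e then p e else 1 - p e

lemma bernoulliWeight_nonneg (hp₀ : ∀ e, 0 ≤ p e) (hp₁ : ∀ e, p e ≤ 1) (ω : E → Bool) :
    0 ≤ bernoulliWeight p ω :=
  prod_nonneg fun e _ => by split <;> linarith [hp₀ e, hp₁ e]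

lemma sum_bernoulliWeight (p : E → ℝ) : ∑ ω, bernoulliWeight p ω = 1 := by
  simp only [bernoulliWeight]
  rw [← Fintype.prod_sum fun e (b : Bool) => if b then p e else 1 - p e]
  simp

lemma bernoulliWeight_inf_mul_sup (p : E → ℝ) (σ τ : E → Bool) :
    bernoulliWeight p (σ ⊓ τ) * bernoulliWeight p (σ ⊔ τ) =
      bernoulliWeight p σ * bernoulliWeight p τ := by
  simp only [bernoulliWeight, ← prod_mul_distrib, Pi.inf_apply, Pi.sup_apply]
  refine prod_congr rfl fun e _ => ?_
  rcases Bool.eq_false_or_eq_true (σ e) with hσ | hσ <;>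
    rcases Bool.eq_false_or_eq_true (τ e) with hτ | hτ <;> simp [hσ, hτ, mul_comm]

lemma bernoulliWeight_of_eq_one {Eb : Finset E} (hp : ∀ e ∈ Eb, p e = 1) (ω : E → Bool) :
    bernoulliWeight p ω = (if ∀ e ∈ Eb, ω e = true then 1 else 0) *
      ∏ e ∈ Ebᶜ, if ω e then p e else 1 - p e := by
  rw [bernoulliWeight, ← prod_mul_prod_compl Eb]
  congr 1
  split_ifs with hω
  · exact prod_eq_one fun e he => by simp [hω e he, hp e he]
  · push Not at hω
    obtain ⟨e, he, hωe⟩ := hω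
    exact prod_eq_zero he (by simp [hωe, hp e he])

end Bernoulli

/-- Reduces to `fkg` for the nonnegative increasing functions `f - c` and `d - g`, where `c` and
`d` bound `f` below and `g` above. -/
lemma fkg_monotone_antitone {α : Type*} [DistribLattice α] [Fintype α] {μ f g : α → ℝ}
    (hμ₀ : 0 ≤ μ) (hμ : ∀ a b, μ a * μ b ≤ μ (a ⊓ b) * μ (a ⊔ b)) (hf : Monotone f)
    (hg : Antitone g) :
    (∑ a, μ a) * ∑ a, μ a * (f a * g a) ≤ (∑ a, μ a * f a) * ∑ a, μ a * g a := by
  obtain ⟨c, hc⟩ := Finite.bddBelow_range f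
  obtain ⟨d, hd⟩ := Finite.bddAbove_range g
  have key := fkg (fun a => f a - c) (fun a => d - g a) μ hμ₀
    (fun a => sub_nonneg.2 (hc ⟨a, rfl⟩)) (fun a => sub_nonneg.2 (hd ⟨a, rfl⟩))
    (fun _ _ hab => sub_le_sub_right (hf hab) c) (fun _ _ hab => sub_le_sub_left (hg hab) d) hμ
  have hF : ∑ a, μ a * (f a - c) = ∑ a, μ a * f a - c * ∑ a, μ a := by
    rw [mul_sum, ← sum_sub_distrib]
    exact sum_congr rfl fun a _ => by ring
  have hG : ∑ a, μ a * (d - g a) = d * ∑ a, μ a - ∑ a, μ a * g a := by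
    rw [mul_sum, ← sum_sub_distrib]
    exact sum_congr rfl fun a _ => by ring
  have hFG : ∑ a, μ a * ((f a - c) * (d - g a)) = d * ∑ a, μ a * f a -
      ∑ a, μ a * (f a * g a) - c * d * ∑ a, μ a + c * ∑ a, μ a * g a := by
    simp only [mul_sum, ← sum_sub_distrib, ← sum_add_distrib]
    exact sum_congr rfl fun a _ => by ring
  rw [hF, hG, hFG] at key
  linear_combination key

lemma sum_mul_div_le_of_antitone {α : Type*} [DistribLattice α] [Fintype α] {μ f g : α → ℝ}
    (hμ₀ : 0 ≤ μ) (hμ₁ : ∑ a, μ a = 1) (hμ : ∀ a b, μ a * μ b ≤ μ (a ⊓ b) * μ (a ⊔ b))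
    (hf : Monotone f) (hg : Antitone g) (hg₀ : ∀ a, 0 < g a) :
    (∑ a, f a * (μ a * g a)) / ∑ a, μ a * g a ≤ ∑ a, f a * μ a := by
  have hpos : 0 < ∑ a, μ a * g a := by
    obtain ⟨a, -, ha⟩ := exists_ne_zero_of_sum_ne_zero (hμ₁.trans_ne one_ne_zero)
    exact sum_pos' (fun b _ => mul_nonneg (hμ₀ b) (hg₀ b).le)
      ⟨a, mem_univ a, mul_pos ((hμ₀ a).lt_of_ne' ha) (hg₀ a)⟩
  rw [div_le_iff₀ hpos]
  calc ∑ a, f a * (μ a * g a) = (∑ a, μ a) * ∑ a, μ a * (f a * g a) := by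
        rw [hμ₁, one_mul]
        exact sum_congr rfl fun a _ => by ring
    _ ≤ (∑ a, μ a * f a) * ∑ a, μ a * g a := fkg_monotone_antitone hμ₀ hμ hf hg
    _ = (∑ a, f a * μ a) * ∑ a, μ a * g a := by simp only [mul_comm (μ _)]

section RandomCluster

variable {V E : Type*} {Eb : Finset E} {q : ℕ} {β : ℝ} {J : E → ℝ}

def wiredEdgeProb (Eb : Finset E) (q : ℕ) (β : ℝ) (J : E → ℝ) (e : E) : ℝ :=
  if e ∈ Eb then 1 else 1 - Real.exp (-((q : ℝ) * β * J e))

lemma wiredEdgeProb_nonneg (hβ : 0 ≤ β) (hJ : ∀ e, 0 ≤ J e) (e : E) :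
    0 ≤ wiredEdgeProb Eb q β J e := by
  unfold wiredEdgeProb
  split
  · exact zero_le_one
  · rw [sub_nonneg, Real.exp_le_one_iff, neg_nonpos]
    exact mul_nonneg (mul_nonneg q.cast_nonneg hβ) (hJ e)

lemma wiredEdgeProb_le_one (e : E) : wiredEdgeProb Eb q β J e ≤ 1 := by
  unfold wiredEdgeProb
  split
  · exact le_rfl
  · linarith [Real.exp_pos (-((q : ℝ) * β * J e))]

variable [Fintype V] [Fintype E] {ends : E → V × V} {Vb : Finset V} {h : V → Fin q → ℝ}
  {hmax : V → ℝ}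

lemma bernoulliWeight_wiredEdgeProb (ω : E → Bool) :
    bernoulliWeight (wiredEdgeProb Eb q β J) ω =
      (if ∀ e ∈ Eb, ω e = true then 1 else 0) *
        ∏ e ∈ Ebᶜ, if ω e then 1 - Real.exp (-((q : ℝ) * β * J e))
          else Real.exp (-((q : ℝ) * β * J e)) := by
  rw [bernoulliWeight_of_eq_one (p := wiredEdgeProb Eb q β J) fun e he => if_pos he]
  congr 1
  refine prod_congr rfl fun e he => ?_
  simp [wiredEdgeProb, mem_compl.1 he]

/-- Edge by edge, `exp a - 1 = exp a * (1 - exp (-a))` and `1 = exp a * exp (-a)`. -/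
lemma wiredWeight_eq (ω : E → Bool) :
    wiredWeight ends q β J h hmax Vb Eb ω = (∏ e ∈ Ebᶜ, Real.exp ((q : ℝ) * β * J e)) *
      (bernoulliWeight (wiredEdgeProb Eb q β J) ω * gWired ends q β h hmax Vb ω) := by
  have hedge : (∏ e ∈ Ebᶜ, if ω e then Real.exp ((q : ℝ) * β * J e) - 1 else 1) =
      (∏ e ∈ Ebᶜ, Real.exp ((q : ℝ) * β * J e)) *
        ∏ e ∈ Ebᶜ, if ω e then 1 - Real.exp (-((q : ℝ) * β * J e))
          else Real.exp (-((q : ℝ) * β * J e)) := by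
    rw [← prod_mul_distrib]
    refine prod_congr rfl fun e _ => ?_
    have hinv : Real.exp ((q : ℝ) * β * J e) * Real.exp (-((q : ℝ) * β * J e)) = 1 := by
      rw [← Real.exp_add, add_neg_cancel, Real.exp_zero]
    split
    · linear_combination hinv
    · linear_combination -hinv
  rw [wiredWeight, hedge, bernoulliWeight_wiredEdgeProb]
  ring

lemma wiredExp_eq (f : (E → Bool) → ℝ) :
    wiredExp ends q β J h hmax Vb Eb f =
      (∑ ω, f ω * (bernoulliWeight (wiredEdgeProb Eb q β J) ω * gWired ends q β h hmax Vb ω)) /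
        ∑ ω, bernoulliWeight (wiredEdgeProb Eb q β J) ω * gWired ends q β h hmax Vb ω := by
  simp only [wiredExp, wiredWeight_eq, mul_left_comm (f _), ← mul_sum]
  exact mul_div_mul_left _ _ (prod_pos fun e _ => Real.exp_pos _).ne'

end RandomCluster

theorem stmt7_general {V E : Type*} [Fintype V] [Fintype E] (ends : E → V × V)
    (Vb : Finset V) (Eb : Finset E)
    (q : ℕ) (β : ℝ) (hβ : 0 < β)
    (J : E → ℝ) (hJ : ∀ e, 0 ≤ J e)
    (h : V → Fin q → ℝ) (hmax : V → ℝ)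
    (hstar : ∃ m : Fin q, ∀ x, h x m = hmax x)
    (f : (E → Bool) → ℝ) (hf : IncreasingFn f) :
    wiredExp ends q β J h hmax Vb Eb f ≤
      ∑ ω : E → Bool, f ω *
        ((if ∀ e ∈ Eb, ω e = true then (1 : ℝ) else 0) *
          ∏ e ∈ Ebᶜ, if ω e then 1 - Real.exp (-((q : ℝ) * β * J e))
            else Real.exp (-((q : ℝ) * β * J e))) := by
  have hq : 0 < q := hstar.elim fun m _ => m.pos
  simp only [← bernoulliWeight_wiredEdgeProb]
  rw [wiredExp_eq]
  exact sum_mul_div_le_of_antitone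
    (bernoulliWeight_nonneg (wiredEdgeProb_nonneg hβ.le hJ) wiredEdgeProb_le_one)
    (sum_bernoulliWeight _) (fun σ τ => (bernoulliWeight_inf_mul_sup _ σ τ).ge)
    (fun _ _ hle => hf hle) (gWired_antitone hstar) (gWired_pos hq)

/-- under condition (★) on `V ∪ ∂V`, the max-wired random-cluster measure
is dominated, on increasing functions, by the product measure opening each interior edge
independently with probability `p_e = 1 − exp(−qβJ_e)` and each boundary edge with
probability `1`. -/
theorem stmt7 {V E : Type*} [Fintype V] [Fintype E] (ends : E → V × V)
    (Vb : Finset V) (Eb : Finset E) (hbd : BdryCompatible ends Vb Eb)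
    (q : ℕ) (hq : 2 ≤ q) (β : ℝ) (hβ : 0 < β)
    (J : E → ℝ) (hJ : ∀ e, 0 ≤ J e)
    (h : V → Fin q → ℝ) (hmax : V → ℝ)
    (hmaxdef : ∀ x, IsGreatest (Set.range (h x)) (hmax x))
    (hstar : ∃ m : Fin q, ∀ x, h x m = hmax x)
    (f : (E → Bool) → ℝ) (hf : IncreasingFn f) :
    wiredExp ends q β J h hmax Vb Eb f ≤
      ∑ ω : E → Bool, f ω *
        ((if ∀ e ∈ Eb, ω e = true then (1 : ℝ) else 0) *
          ∏ e ∈ Ebᶜ, if ω e then 1 - Real.exp (-((q : ℝ) * β * J e))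
            else Real.exp (-((q : ℝ) * β * J e))) :=
  stmt7_general ends Vb Eb q β hβ J hJ h hmax hstar f hf
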